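/- arXiv:1506.05704 — 2 statements merged into one kernel-verified Lean document; each statement's English description precedes it below -/
import Mathlib

section
/- (Lemma 1.5, Berger case.) For every R > 0 and every ε > 0 there exists a constant M ≥ 0 such that for every smooth function u : ℝ² → ℝ with support contained in the closed ball of radius R centered at the origin, one has ∫_{ℝ²} u² ≤ ε ( ∫_{ℝ²} |Δu|² + (1/4) ( ∫_{ℝ²} |∇u|² )² ) + M. -/
open MeasureTheory

/-- The Laplacian of a function on ℝ² (as `EuclideanSpace ℝ (Fin 2)`). -/
noncomputable def laplacian2 (u : EuclideanSpace ℝ (Fin 2) → ℝ)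
    (x : EuclideanSpace ℝ (Fin 2)) : ℝ :=
  ∑ i : Fin 2, fderiv ℝ (fun y => fderiv ℝ u y (EuclideanSpace.single i 1)) x
    (EuclideanSpace.single i 1)

noncomputable def ψ (p : ℝ × ℝ) : EuclideanSpace ℝ (Fin 2) :=
  p.1 • EuclideanSpace.single 0 1 + p.2 • EuclideanSpace.single 1 1

lemma norm_ψ_fst (t y : ℝ) : |t| ≤ ‖ψ (t, y)‖ := by
  have h : ψ (t, y) 0 = t := by simp [ψ, EuclideanSpace.single_apply]
  calc |t| = Real.sqrt (‖ψ (t,y) 0‖ ^ 2) := by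
        rw [h]; rw [Real.norm_eq_abs, sq_abs, Real.sqrt_sq_eq_abs]
    _ ≤ ‖ψ (t, y)‖ := by
        rw [EuclideanSpace.norm_eq]
        refine Real.sqrt_le_sqrt ?_
        exact Finset.single_le_sum (f := fun i => ‖ψ (t,y) i‖ ^ 2)
          (fun i _ => by positivity) (Finset.mem_univ 0)

section slice
variable {R : ℝ} (hR : 0 < R) {u : EuclideanSpace ℝ (Fin 2) → ℝ}
  (hu : ContDiff ℝ (⊤ : ℕ∞) u) (hsupp : Function.support u ⊆ Metric.closedBall 0 R)

include hsupp in
lemma fderiv_supp : ∀ x ∉ Metric.closedBall (0 : EuclideanSpace ℝ (Fin 2)) R,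
    fderiv ℝ u x = 0 := by
  intro x hx
  have hopen : IsOpen (Metric.closedBall (0 : EuclideanSpace ℝ (Fin 2)) R)ᶜ :=
    Metric.isClosed_closedBall.isOpen_compl
  have hev : u =ᶠ[nhds x] (fun _ => (0 : ℝ)) := by
    filter_upwards [hopen.mem_nhds hx] with z hz
    by_contra h
    exact hz (hsupp h)
  rw [hev.fderiv_eq, fderiv_fun_const]
  rfl

include hR hu hsupp in
lemma slice_bound (y : ℝ) :
    (∫ t : ℝ, (u (ψ (t, y))) ^ 2) ≤
      4 * (R + 1) ^ 2 * ∫ t : ℝ, ‖fderiv ℝ u (ψ (t, y))‖ ^ 2 := by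
  set L : ℝ := R + 1 with hL
  have hL0 : 0 < L := by linarith
  have hLL : -L ≤ L := by linarith
  set e₀ : EuclideanSpace ℝ (Fin 2) := EuclideanSpace.single 0 1 with he₀
  set g : ℝ → ℝ := fun t => u (ψ (t, y)) with hg
  set G : ℝ → ℝ := fun t => fderiv ℝ u (ψ (t, y)) e₀ with hGdef
  set F : ℝ → ℝ := fun t => ‖fderiv ℝ u (ψ (t, y))‖ ^ 2 with hFdef
  have hψd : ∀ t : ℝ, HasDerivAt (fun t => ψ (t, y)) e₀ t := by
    intro t
    have : HasDerivAt (fun t : ℝ => t • e₀ + y • EuclideanSpace.single 1 1)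
        ((1 : ℝ) • e₀) t := ((hasDerivAt_id t).smul_const e₀).add_const _
    simpa [ψ] using this
  have hgd : ∀ t : ℝ, HasDerivAt g (G t) t := fun t =>
    ((hu.differentiable (by simp)).differentiableAt.hasFDerivAt).comp_hasDerivAt t (hψd t)
  have hψc : Continuous fun t : ℝ => ψ (t, y) := by
    simp only [ψ]; fun_prop
  have hfdc : Continuous fun t : ℝ => fderiv ℝ u (ψ (t, y)) :=
    (hu.continuous_fderiv (by simp)).comp hψc
  have hGc : Continuous G := hfdc.clm_apply continuous_const
  have hgc : Continuous g := hu.continuous.comp hψc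
  have hFc : Continuous F := (hfdc.norm).pow 2
  -- vanishing outside [-L, L]
  have hmem : ∀ t : ℝ, L ≤ |t| →
      ψ (t, y) ∉ Metric.closedBall (0 : EuclideanSpace ℝ (Fin 2)) R := by
    intro t ht hmem
    rw [Metric.mem_closedBall, dist_zero_right] at hmem
    have := le_trans ht (norm_ψ_fst t y)
    linarith [le_trans this hmem]
  have hg0 : ∀ t : ℝ, L ≤ |t| → g t = 0 := by
    intro t ht
    by_contra h
    exact hmem t ht (hsupp h)
  have hfd0 : ∀ t : ℝ, L ≤ |t| → fderiv ℝ u (ψ (t, y)) = 0 := fun t ht =>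
    fderiv_supp hsupp _ (hmem t ht)
  have hG0 : ∀ t : ℝ, L ≤ |t| → G t = 0 := fun t ht => by
    simp [hGdef, hfd0 t ht]
  have habs : ∀ t : ℝ, t ∉ Set.Icc (-L) L → L ≤ |t| := by
    intro t ht
    rw [Set.mem_Icc, not_and_or, not_le, not_le] at ht
    rcases ht with h | h
    · rw [abs_of_neg (by linarith)]; linarith
    · rw [abs_of_pos (by linarith)]; linarith
  have hgsupp : HasCompactSupport g :=
    HasCompactSupport.intro (K := Set.Icc (-L) L) isCompact_Icc
      (fun t ht => hg0 t (habs t ht))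
  have hGsupp : HasCompactSupport G :=
    HasCompactSupport.intro (K := Set.Icc (-L) L) isCompact_Icc
      (fun t ht => hG0 t (habs t ht))
  have hFsupp : HasCompactSupport F :=
    HasCompactSupport.intro (K := Set.Icc (-L) L) isCompact_Icc
      (fun t ht => by simp [hFdef, hfd0 t (habs t ht)])
  have hGi : Integrable G := hGc.integrable_of_hasCompactSupport hGsupp
  have hFi : Integrable F := hFc.integrable_of_hasCompactSupport hFsupp
  -- FTC bound
  have key : ∀ s : ℝ, |g s| ≤ ∫ t in (-L)..L, |G t| := by
    have habs0 : (0:ℝ) ≤ ∫ t in (-L)..L, |G t| := by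
      rw [intervalIntegral.integral_of_le hLL]
      exact integral_nonneg fun t => abs_nonneg _
    intro s
    rcases le_or_gt |s| L with hs | hs
    · have hs1 : -L ≤ s := neg_le_of_abs_le hs
      have hftc : ∫ t in (-L)..s, G t = g s - g (-L) :=
        intervalIntegral.integral_eq_sub_of_hasDerivAt (fun t _ => hgd t)
          (hGc.intervalIntegrable _ _)
      have hgL : g (-L) = 0 := hg0 _ (by rw [abs_neg, abs_of_pos hL0])
      rw [← sub_zero (g s), ← hgL, ← hftc]
      calc |∫ t in (-L)..s, G t| ≤ ∫ t in (-L)..s, |G t| :=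
            intervalIntegral.abs_integral_le_integral_abs hs1
        _ ≤ ∫ t in (-L)..L, |G t| :=
            intervalIntegral.integral_mono_interval le_rfl hs1 (le_of_abs_le hs)
              (Filter.Eventually.of_forall fun t => abs_nonneg _)
              ((hGc.abs).intervalIntegrable _ _)
    · rw [hg0 s hs.le, abs_zero]; exact habs0
  have habs' : ∀ t : ℝ, t ∉ Set.Ioc (-L) L → L ≤ |t| := by
    intro t ht
    rw [Set.mem_Ioc, not_and_or, not_lt, not_le] at ht
    rcases ht with h | h
    · rcases eq_or_lt_of_le h with h' | h'
      · rw [h', abs_neg, abs_of_pos hL0]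
      · rw [abs_of_neg (by linarith)]; linarith
    · rw [abs_of_pos (by linarith)]; linarith
  -- rewrite interval integrals as set integrals
  set D : ℝ := ∫ t in Set.Ioc (-L) L, G t ^ 2 with hD
  have hD0 : 0 ≤ D := integral_nonneg fun t => sq_nonneg _
  have hGabs0 : 0 ≤ ∫ t in Set.Ioc (-L) L, |G t| :=
    integral_nonneg fun t => abs_nonneg _
  -- Cauchy-Schwarz on the interval
  have hCS : (∫ t in Set.Ioc (-L) L, |G t|) ^ 2 ≤ (2 * L) * D := by
    set μ := volume.restrict (Set.Ioc (-L) L) with hμ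
    have hconj : Real.HolderConjugate 2 2 := Real.HolderConjugate.two_two
    have hGm : MemLp (fun t => |G t|) (ENNReal.ofReal 2) μ :=
      ((hGc.abs).memLp_of_hasCompactSupport (hGsupp.abs)).restrict _
    have h1m : MemLp (fun _ : ℝ => (1:ℝ)) (ENNReal.ofReal 2) μ := memLp_const 1
    have hH := integral_mul_le_Lp_mul_Lq_of_nonneg hconj
      (f := fun t => |G t|) (g := fun _ => (1:ℝ)) (μ := μ)
      (Filter.Eventually.of_forall fun t => abs_nonneg _)
      (Filter.Eventually.of_forall fun t => zero_le_one) hGm h1m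
    have e1 : ∫ t, |G t| ^ (2:ℝ) ∂μ = D := by
      rw [hD]
      refine integral_congr_ae (Filter.Eventually.of_forall fun t => ?_)
      show |G t| ^ (2:ℝ) = G t ^ 2
      rw [← sq_abs (G t), ← Real.rpow_natCast |G t| 2]
      norm_num
    have e2 : ∫ _ : ℝ, (1:ℝ) ^ (2:ℝ) ∂μ = 2 * L := by
      simp only [Real.one_rpow]
      rw [hμ, setIntegral_const, smul_eq_mul, mul_one,
        Real.volume_real_Ioc_of_le (by linarith)]
      ring
    simp only [mul_one, e1, e2] at hH
    have h2L0 : (0:ℝ) ≤ 2 * L := by linarith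
    calc (∫ t, |G t| ∂μ) ^ 2 ≤ (D ^ ((1:ℝ)/2) * (2*L) ^ ((1:ℝ)/2)) ^ 2 :=
          pow_le_pow_left₀ hGabs0 hH 2
      _ = D * (2 * L) := by
          rw [mul_pow, ← Real.rpow_natCast (D ^ ((1:ℝ)/2)) 2,
            ← Real.rpow_natCast ((2*L) ^ ((1:ℝ)/2)) 2,
            ← Real.rpow_mul hD0, ← Real.rpow_mul h2L0]
          norm_num
      _ = (2 * L) * D := mul_comm _ _
  -- pointwise bound for g ^ 2
  have key2 : ∀ s : ℝ, g s ^ 2 ≤ (2 * L) * D := by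
    intro s
    have h1 : |g s| ≤ ∫ t in Set.Ioc (-L) L, |G t| := by
      have := key s
      rwa [intervalIntegral.integral_of_le hLL] at this
    calc g s ^ 2 = |g s| ^ 2 := (sq_abs _).symm
      _ ≤ (∫ t in Set.Ioc (-L) L, |G t|) ^ 2 := pow_le_pow_left₀ (abs_nonneg _) h1 2
      _ ≤ (2 * L) * D := hCS
  -- G ^ 2 ≤ F pointwise
  have hGF : ∀ t : ℝ, G t ^ 2 ≤ F t := by
    intro t
    have h1 : |G t| ≤ ‖fderiv ℝ u (ψ (t, y))‖ := by
      rw [← Real.norm_eq_abs]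
      simpa [he₀, EuclideanSpace.norm_single] using (fderiv ℝ u (ψ (t, y))).le_opNorm e₀
    calc G t ^ 2 = |G t| ^ 2 := (sq_abs _).symm
      _ ≤ ‖fderiv ℝ u (ψ (t, y))‖ ^ 2 := pow_le_pow_left₀ (abs_nonneg _) h1 2
      _ = F t := rfl
  have hDF : D ≤ ∫ t : ℝ, F t := by
    calc D ≤ ∫ t in Set.Ioc (-L) L, F t :=
          setIntegral_mono_on
            (((hGc.pow 2).integrable_of_hasCompactSupport
              (HasCompactSupport.intro (K := Set.Icc (-L) L) isCompact_Icc
                (fun t ht => by simp [hG0 t (habs t ht)]))).integrableOn)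
            (hFi.integrableOn) measurableSet_Ioc (fun t _ => hGF t)
      _ ≤ ∫ t : ℝ, F t := setIntegral_le_integral hFi
            (Filter.Eventually.of_forall fun t => sq_nonneg _)
  -- assemble
  have hI1 : ∫ t : ℝ, g t ^ 2 = ∫ t in Set.Ioc (-L) L, g t ^ 2 :=
    (setIntegral_eq_integral_of_forall_compl_eq_zero
      (fun t ht => by rw [hg0 t (habs' t ht)]; ring)).symm
  have hg2i : IntegrableOn (fun t => g t ^ 2) (Set.Ioc (-L) L) volume :=
    ((hgc.pow 2).integrable_of_hasCompactSupport
      (HasCompactSupport.intro (K := Set.Icc (-L) L) isCompact_Icc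
        (fun t ht => by simp [hg0 t (habs t ht)]))).integrableOn
  calc ∫ t : ℝ, g t ^ 2 = ∫ t in Set.Ioc (-L) L, g t ^ 2 := hI1
    _ ≤ ∫ _ in Set.Ioc (-L) L, (2 * L) * D :=
        setIntegral_mono_on hg2i (integrableOn_const (by
          rw [Real.volume_Ioc]; exact ENNReal.ofReal_ne_top))
          measurableSet_Ioc (fun t _ => key2 t)
    _ = (2 * L) * ((2 * L) * D) := by
        rw [setIntegral_const, smul_eq_mul,
          Real.volume_real_Ioc_of_le (by linarith)]
        ring_nf
    _ ≤ 4 * L ^ 2 * D := by nlinarith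
    _ ≤ 4 * L ^ 2 * ∫ t : ℝ, F t := by nlinarith [sq_nonneg L]
end slice

noncomputable def ψe : (ℝ × ℝ) ≃ᵐ EuclideanSpace ℝ (Fin 2) :=
  (MeasurableEquiv.finTwoArrow (α := ℝ)).symm.trans
    (MeasurableEquiv.toLp 2 (Fin 2 → ℝ))

lemma ψe_eq : (ψe : ℝ × ℝ → EuclideanSpace ℝ (Fin 2)) = ψ := by
  funext p
  refine PiLp.ext fun i => ?_
  fin_cases i <;>
    simp [ψ, ψe, MeasurableEquiv.finTwoArrow,
      EuclideanSpace.single_apply]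

lemma ψe_mp : MeasurePreserving ψe (volume.prod volume) volume :=
  ((EuclideanSpace.volume_preserving_symm_measurableEquiv_toLp (Fin 2)).symm).comp
    ((volume_preserving_finTwoArrow ℝ).symm)

lemma integral_ψ (f : EuclideanSpace ℝ (Fin 2) → ℝ) :
    ∫ x, f x = ∫ p : ℝ × ℝ, f (ψ p) ∂(volume.prod volume) := by
  rw [← ψe_eq]
  exact (MeasurePreserving.integral_comp ψe_mp ψe.measurableEmbedding f).symm

lemma integrable_ψ {f : EuclideanSpace ℝ (Fin 2) → ℝ} (hf : Integrable f) :
    Integrable (fun p : ℝ × ℝ => f (ψ p)) (volume.prod volume) := by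
  rw [← ψe_eq]
  exact (MeasurePreserving.integrable_comp_emb ψe_mp ψe.measurableEmbedding).2 hf

section main
variable {R : ℝ} (hR : 0 < R) {u : EuclideanSpace ℝ (Fin 2) → ℝ}
  (hu : ContDiff ℝ (⊤ : ℕ∞) u) (hsupp : Function.support u ⊆ Metric.closedBall 0 R)

include hR hu hsupp in
lemma poincare2 :
    (∫ x, (u x) ^ 2) ≤ 4 * (R + 1) ^ 2 * ∫ x, ‖fderiv ℝ u x‖ ^ 2 := by
  have h0 : ∀ x ∉ Metric.closedBall (0 : EuclideanSpace ℝ (Fin 2)) R, u x = 0 := by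
    intro x hx
    by_contra h
    exact hx (hsupp h)
  have hcb : IsCompact (Metric.closedBall (0 : EuclideanSpace ℝ (Fin 2)) R) :=
    isCompact_closedBall 0 R
  have hu2i : Integrable (fun x => u x ^ 2) :=
    (hu.continuous.pow 2).integrable_of_hasCompactSupport
      (HasCompactSupport.intro hcb (fun x hx => by simp [h0 x hx]))
  have hFc : Continuous (fun x : EuclideanSpace ℝ (Fin 2) => ‖fderiv ℝ u x‖ ^ 2) :=
    ((hu.continuous_fderiv (by simp)).norm).pow 2
  have hFi : Integrable (fun x => ‖fderiv ℝ u x‖ ^ 2) :=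
    hFc.integrable_of_hasCompactSupport
      (HasCompactSupport.intro hcb (fun x hx => by simp [fderiv_supp hsupp x hx]))
  have hu2p : Integrable (fun p : ℝ × ℝ => u (ψ p) ^ 2) (volume.prod volume) :=
    integrable_ψ hu2i
  have hFp : Integrable (fun p : ℝ × ℝ => ‖fderiv ℝ u (ψ p)‖ ^ 2) (volume.prod volume) :=
    integrable_ψ hFi
  have e1 : (∫ x, (u x) ^ 2) = ∫ y : ℝ, ∫ t : ℝ, u (ψ (t, y)) ^ 2 := by
    rw [integral_ψ (fun x => u x ^ 2)]
    exact integral_prod_symm _ hu2p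
  have e2 : (∫ x, ‖fderiv ℝ u x‖ ^ 2) =
      ∫ y : ℝ, ∫ t : ℝ, ‖fderiv ℝ u (ψ (t, y))‖ ^ 2 := by
    rw [integral_ψ (fun x => ‖fderiv ℝ u x‖ ^ 2)]
    exact integral_prod_symm _ hFp
  rw [e1, e2, ← integral_const_mul]
  refine integral_mono hu2p.integral_prod_right
    (hFp.integral_prod_right.const_mul _) (fun y => ?_)
  exact slice_bound hR hu hsupp y

include hR hu hsupp in
lemma main_ineq {ε : ℝ} (hε : 0 < ε) :
    (∫ x, (u x) ^ 2) ≤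
      ε * ((∫ x, |laplacian2 u x| ^ 2) +
        (1 / 4) * (∫ x, ‖fderiv ℝ u x‖ ^ 2) ^ 2) + 16 * (R + 1) ^ 4 / ε := by
  have hP := poincare2 hR hu hsupp
  set T : ℝ := ∫ x, ‖fderiv ℝ u x‖ ^ 2 with hT
  have hT0 : 0 ≤ T := integral_nonneg fun x => sq_nonneg _
  have hA0 : 0 ≤ ∫ x, |laplacian2 u x| ^ 2 := integral_nonneg fun x => sq_nonneg _
  have hMε : (16 * (R + 1) ^ 4 / ε) * ε = 16 * (R + 1) ^ 4 := by field_simp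
  have key : 4 * (R + 1) ^ 2 * T ≤ ε * ((1/4) * T ^ 2) + 16 * (R + 1) ^ 4 / ε := by
    nlinarith [sq_nonneg (ε * T - 8 * (R + 1) ^ 2), mul_pos hε hε, sq_nonneg (R+1)]
  nlinarith [mul_nonneg hε.le hA0]
end main

/-- Lemma 1.5 (Berger case): for every `R > 0` and `ε > 0` there is `M ≥ 0` such that
for every smooth `u : ℝ² → ℝ` supported in the closed ball of radius `R`,
`∫ u² ≤ ε (∫ |Δu|² + (1/4)(∫ |∇u|²)²) + M`. -/
theorem stmt0 (R : ℝ) (hR : 0 < R) (ε : ℝ) (hε : 0 < ε) :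
    ∃ M : ℝ, 0 ≤ M ∧ ∀ u : EuclideanSpace ℝ (Fin 2) → ℝ,
      ContDiff ℝ (⊤ : ℕ∞) u → Function.support u ⊆ Metric.closedBall 0 R →
      (∫ x, (u x) ^ 2) ≤
        ε * ((∫ x, |laplacian2 u x| ^ 2) +
          (1 / 4) * (∫ x, ‖fderiv ℝ u x‖ ^ 2) ^ 2) + M := by
  refine ⟨16 * (R + 1) ^ 4 / ε, by positivity, fun u hu hsupp => ?_⟩
  exact main_ineq hR hu hsupp hε
end

section
/- (Lemma 1.4, interactive energy bound.) Let Z > 0. For every U ≥ 0, every δ > 0, every smooth compactly supported φ : ℝ³ → ℝ whose support is contained in ℝ² × [−Z, Z], and every smooth compactly supported u : ℝ² → ℝ, one has 2U | ∫_{ℝ²} φ(x, y, 0) ∂_x u(x, y) dx dy | ≤ U δ ∫_{ℝ³} |∇φ|² + (U Z / δ) ∫_{ℝ²} |∂_x u|². -/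
open MeasureTheory


noncomputable def pt (x y z : ℝ) : EuclideanSpace ℝ (Fin 3) :=
  (WithLp.equiv 2 (Fin 3 → ℝ)).symm ![x, y, z]

example (x y z : ℝ) : pt x y z 0 = x := rfl
example (x y z : ℝ) : pt x y z 1 = y := rfl
example (x y z : ℝ) : pt x y z 2 = z := rfl

lemma pt_eq (x y z : ℝ) : pt x y z = pt x y 0 + z • EuclideanSpace.single 2 1 := by
  ext i
  fin_cases i <;>
    simp [pt, EuclideanSpace.single_apply, PiLp.add_apply, PiLp.smul_apply]

lemma hasDerivAt_pt (x y : ℝ) (z₀ : ℝ) :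
    HasDerivAt (fun z => pt x y z) (EuclideanSpace.single 2 1) z₀ := by
  have h : (fun z => pt x y z) = fun z => pt x y 0 + z • EuclideanSpace.single 2 (1:ℝ) :=
    funext (pt_eq x y)
  rw [h]
  simpa using ((hasDerivAt_id z₀).smul_const (EuclideanSpace.single (2 : Fin 3) (1:ℝ))).const_add
    (pt x y 0)

lemma isometry_line (x y : ℝ) : Isometry (fun z => pt x y z) := by
  apply Isometry.of_dist_eq
  intro a b
  simp [EuclideanSpace.dist_eq, Fin.sum_univ_three, Real.dist_eq, Real.sqrt_sq_eq_abs, abs_abs,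
    pt]

lemma continuous_line (x y : ℝ) : Continuous (fun z => pt x y z) :=
  (isometry_line x y).continuous

lemma continuous_plane : Continuous (fun p : EuclideanSpace ℝ (Fin 2) => pt (p 0) (p 1) 0) := by
  have h1 : Continuous fun p : EuclideanSpace ℝ (Fin 2) => p 0 := by fun_prop
  have h2 : Continuous fun p : EuclideanSpace ℝ (Fin 2) => p 1 := by fun_prop
  have : (fun p : EuclideanSpace ℝ (Fin 2) => pt (p 0) (p 1) 0)
      = fun p => pt 0 0 0 + (p 0) • EuclideanSpace.single 0 1 + (p 1) • EuclideanSpace.single 1 1 := by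
    funext p
    ext i
    fin_cases i <;> simp [pt, EuclideanSpace.single_apply]
  rw [this]
  fun_prop

-- measure preserving names
noncomputable def T : ℝ × (Fin 2 → ℝ) → EuclideanSpace ℝ (Fin 3) := fun zw =>
  ((MeasurableEquiv.toLp 2 (Fin 3 → ℝ)).symm).symm
    ((MeasurableEquiv.piFinSuccAbove (fun _ => ℝ) 2).symm zw)

lemma hT : MeasurePreserving T volume volume :=
  ((EuclideanSpace.volume_preserving_symm_measurableEquiv_toLp (Fin 3)).symm).comp
    ((volume_preserving_piFinSuccAbove (fun _ => ℝ) 2).symm)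

lemma hTemb : MeasurableEmbedding T :=
  (((MeasurableEquiv.toLp 2 (Fin 3 → ℝ)).symm).symm.measurableEmbedding).comp
    ((MeasurableEquiv.piFinSuccAbove (fun _ => ℝ) 2).symm.measurableEmbedding)

lemma hTpt (z : ℝ) (w : Fin 2 → ℝ) : T (z, w) = pt (w 0) (w 1) z := by
  show (WithLp.equiv 2 (Fin 3 → ℝ)).symm _ = _
  unfold pt
  congr 1
  funext i
  fin_cases i <;>
    simp [MeasurableEquiv.piFinSuccAbove, Fin.insertNth] <;>
    first
      | exact Fin.insertNth_apply_succAbove (α := fun _ : Fin 3 => ℝ) 2 z w 0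
      | exact Fin.insertNth_apply_succAbove (α := fun _ : Fin 3 => ℝ) 2 z w 1
      | rfl

lemma fubini_eq (Q : EuclideanSpace ℝ (Fin 3) → ℝ) (hQint : Integrable Q) :
    (∫ p : EuclideanSpace ℝ (Fin 2), ∫ z : ℝ, Q (pt (p 0) (p 1) z)) = ∫ q, Q q := by
  have hQT : Integrable (fun zw : ℝ × (Fin 2 → ℝ) => Q (T zw)) volume :=
    (hT.integrable_comp_emb hTemb).mpr hQint
  have h1 : ∫ q, Q q = ∫ zw : ℝ × (Fin 2 → ℝ), Q (T zw) := (hT.integral_comp hTemb Q).symm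
  rw [h1, Measure.volume_eq_prod, integral_prod_symm _ (by rwa [Measure.volume_eq_prod] at hQT)]
  simp only [hTpt]
  exact ((EuclideanSpace.volume_preserving_symm_measurableEquiv_toLp (Fin 2)).integral_comp
    ((MeasurableEquiv.toLp 2 (Fin 2 → ℝ)).symm).measurableEmbedding
    (fun w : Fin 2 → ℝ => ∫ z : ℝ, Q (pt (w 0) (w 1) z)))

lemma fubini_int (Q : EuclideanSpace ℝ (Fin 3) → ℝ) (hQint : Integrable Q) :
    Integrable (fun p : EuclideanSpace ℝ (Fin 2) => ∫ z : ℝ, Q (pt (p 0) (p 1) z)) volume := by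
  have hQT : Integrable (fun zw : ℝ × (Fin 2 → ℝ) => Q (T zw)) volume :=
    (hT.integrable_comp_emb hTemb).mpr hQint
  rw [Measure.volume_eq_prod] at hQT
  have h2 := hQT.integral_prod_right
  simp only [hTpt] at h2
  exact ((EuclideanSpace.volume_preserving_symm_measurableEquiv_toLp (Fin 2)).integrable_comp_emb
    ((MeasurableEquiv.toLp 2 (Fin 2 → ℝ)).symm).measurableEmbedding).mpr h2

lemma amgm {δ : ℝ} (hδ : 0 < δ) (a b : ℝ) : 2 * |a| * |b| ≤ δ * a ^ 2 + (1 / δ) * b ^ 2 := by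
  have h1 : 0 ≤ (δ * |a| - |b|) ^ 2 := sq_nonneg _
  have h2 : δ * (2 * |a| * |b|) ≤ δ * (δ * a ^ 2 + (1 / δ) * b ^ 2) := by
    have ha : |a| ^ 2 = a ^ 2 := sq_abs a
    have hb : |b| ^ 2 = b ^ 2 := sq_abs b
    have h1' : 0 ≤ δ ^ 2 * a ^ 2 - 2 * δ * (|a| * |b|) + b ^ 2 := by nlinarith [h1, ha, hb]
    field_simp
    nlinarith [h1']
  exact le_of_mul_le_mul_left h2 hδ

set_option maxHeartbeats 1000000 in
open Filter in
lemma pointwise_bound {Z δ : ℝ} (hZ : 0 < Z) (hδ : 0 < δ)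
    {φ : EuclideanSpace ℝ (Fin 3) → ℝ} (hφ : ContDiff ℝ (⊤ : ℕ∞) φ) (hφc : HasCompactSupport φ)
    (hφZ : Function.support φ ⊆ {p : EuclideanSpace ℝ (Fin 3) | |p 2| ≤ Z})
    (x y b : ℝ) :
    2 * |φ (pt x y 0) * b| ≤
      δ * (∫ z : ℝ, (fderiv ℝ φ (pt x y z) (EuclideanSpace.single 2 1)) ^ 2) +
        (Z / δ) * b ^ 2 := by
  set f' : ℝ → ℝ := fun z => fderiv ℝ φ (pt x y z) (EuclideanSpace.single 2 1) with hf'def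
  have hφd : Differentiable ℝ φ := hφ.differentiable (by simp)
  have hder : ∀ z : ℝ, HasDerivAt (fun z => φ (pt x y z)) (f' z) z := fun z =>
    (hφd (pt x y z)).hasFDerivAt.comp_hasDerivAt z (hasDerivAt_pt x y z)
  have hfd_cont : Continuous (fderiv ℝ φ) := hφ.continuous_fderiv (by simp)
  have hf'c : Continuous f' := (hfd_cont.comp (continuous_line x y)).clm_apply continuous_const
  have hzero : ∀ z : ℝ, Z < z → φ (pt x y z) = 0 := by
    intro z hz
    by_contra h
    have hmem := hφZ h
    simp only [Set.mem_setOf_eq] at hmem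
    have h2 : (pt x y z) 2 = z := rfl
    rw [h2] at hmem
    have : z ≤ Z := le_trans (le_abs_self z) hmem
    linarith
  have hfZ : φ (pt x y Z) = 0 := by
    have hc : Tendsto (fun z => φ (pt x y z)) (nhdsWithin Z (Set.Ioi Z))
        (nhds (φ (pt x y Z))) :=
      ((hφ.continuous.comp (continuous_line x y)).continuousAt).continuousWithinAt
    have h0 : Tendsto (fun z => φ (pt x y z)) (nhdsWithin Z (Set.Ioi Z)) (nhds 0) := by
      apply Tendsto.congr' _ tendsto_const_nhds
      filter_upwards [self_mem_nhdsWithin] with z hz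
      exact (hzero z hz).symm
    exact tendsto_nhds_unique hc h0
  have hFTC : ∫ z in (0:ℝ)..Z, f' z = φ (pt x y Z) - φ (pt x y 0) :=
    intervalIntegral.integral_eq_sub_of_hasDerivAt (fun z _ => hder z)
      (hf'c.intervalIntegrable 0 Z)
  have hval : φ (pt x y 0) = -∫ z in Set.Ioc (0:ℝ) Z, f' z := by
    rw [← intervalIntegral.integral_of_le hZ.le, hFTC, hfZ]; ring
  have hQline_cont : Continuous (fun z => (f' z) ^ 2) := hf'c.pow 2
  have hQline_supp : HasCompactSupport (fun z => (f' z) ^ 2) := by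
    have hQc : HasCompactSupport
        (fun q : EuclideanSpace ℝ (Fin 3) =>
          (fderiv ℝ φ q (EuclideanSpace.single 2 1)) ^ 2) :=
      (hφc.fderiv ℝ).comp_left
        (g := fun L : EuclideanSpace ℝ (Fin 3) →L[ℝ] ℝ => (L (EuclideanSpace.single 2 1)) ^ 2)
        (by simp)
    exact hQc.comp_isClosedEmbedding (isometry_line x y).isClosedEmbedding
  have hQline_int : Integrable (fun z => (f' z) ^ 2) :=
    hQline_cont.integrable_of_hasCompactSupport hQline_supp
  have habs : |φ (pt x y 0)| ≤ ∫ z in Set.Ioc (0:ℝ) Z, |f' z| := by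
    rw [hval, abs_neg]
    simpa using norm_integral_le_integral_norm (μ := volume.restrict (Set.Ioc (0:ℝ) Z)) f'
  have int1 : IntegrableOn (fun z => 2 * |f' z| * |b|) (Set.Ioc (0:ℝ) Z) :=
    ((continuous_const.mul hf'c.abs).mul continuous_const).integrableOn_Ioc
  have int2 : IntegrableOn (fun z => δ * f' z ^ 2 + (1 / δ) * b ^ 2) (Set.Ioc (0:ℝ) Z) :=
    ((continuous_const.mul hQline_cont).add continuous_const).integrableOn_Ioc
  calc 2 * |φ (pt x y 0) * b| = 2 * |φ (pt x y 0)| * |b| := by rw [abs_mul]; ring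
    _ ≤ 2 * (∫ z in Set.Ioc (0:ℝ) Z, |f' z|) * |b| := by
        have hb : (0:ℝ) ≤ |b| := abs_nonneg b
        gcongr
    _ = ∫ z in Set.Ioc (0:ℝ) Z, 2 * |f' z| * |b| := by
        rw [integral_mul_const, integral_const_mul]
    _ ≤ ∫ z in Set.Ioc (0:ℝ) Z, (δ * f' z ^ 2 + (1 / δ) * b ^ 2) :=
        setIntegral_mono_on int1 int2 measurableSet_Ioc (fun z _ => amgm hδ (f' z) b)
    _ = δ * (∫ z in Set.Ioc (0:ℝ) Z, f' z ^ 2) + Z * ((1 / δ) * b ^ 2) := by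
        rw [integral_add (show IntegrableOn (fun z => δ * f' z ^ 2) (Set.Ioc (0:ℝ) Z) volume from
            (continuous_const.mul hQline_cont).integrableOn_Ioc)
          (show IntegrableOn (fun _ => 1 / δ * b ^ 2) (Set.Ioc (0:ℝ) Z) volume from
            integrableOn_const measure_Ioc_lt_top.ne), integral_const_mul,
          setIntegral_const]
        simp [Real.volume_Ioc, hZ.le]
    _ ≤ δ * (∫ z : ℝ, f' z ^ 2) + (Z / δ) * b ^ 2 := by
        have hmono : (∫ z in Set.Ioc (0:ℝ) Z, f' z ^ 2) ≤ ∫ z : ℝ, f' z ^ 2 :=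
          setIntegral_le_integral hQline_int (Eventually.of_forall fun z => sq_nonneg _)
        have he : Z * ((1 / δ) * b ^ 2) = (Z / δ) * b ^ 2 := by ring
        have := mul_le_mul_of_nonneg_left hmono hδ.le
        linarith

set_option maxHeartbeats 4000000 in
/-- Lemma 1.4 (interactive energy bound): for `Z > 0`, `U ≥ 0`, `δ > 0`, a smooth
compactly supported flow potential `φ : ℝ³ → ℝ` supported in the slab `|z| ≤ Z`,
and a smooth compactly supported `u : ℝ² → ℝ`,
`2U |∫_{ℝ²} φ(x,y,0) ∂ₓu| ≤ Uδ ∫_{ℝ³} |∇φ|² + (UZ/δ) ∫_{ℝ²} |∂ₓu|²`. -/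
theorem stmt1 (Z : ℝ) (hZ : 0 < Z) (U : ℝ) (hU : 0 ≤ U) (δ : ℝ) (hδ : 0 < δ)
    (φ : EuclideanSpace ℝ (Fin 3) → ℝ) (hφ : ContDiff ℝ (⊤ : ℕ∞) φ)
    (hφc : HasCompactSupport φ)
    (hφZ : Function.support φ ⊆ {p : EuclideanSpace ℝ (Fin 3) | |p 2| ≤ Z})
    (u : EuclideanSpace ℝ (Fin 2) → ℝ) (hu : ContDiff ℝ (⊤ : ℕ∞) u)
    (huc : HasCompactSupport u) :
    2 * U * |∫ p : EuclideanSpace ℝ (Fin 2),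
        φ ((WithLp.equiv 2 (Fin 3 → ℝ)).symm ![p 0, p 1, 0]) *
          fderiv ℝ u p (EuclideanSpace.single 0 1)| ≤
      U * δ * (∫ q : EuclideanSpace ℝ (Fin 3), ‖fderiv ℝ φ q‖ ^ 2) +
        (U * Z / δ) * ∫ p : EuclideanSpace ℝ (Fin 2),
          |fderiv ℝ u p (EuclideanSpace.single 0 1)| ^ 2 := by
  have hkey : ∀ p : EuclideanSpace ℝ (Fin 2),
      φ ((WithLp.equiv 2 (Fin 3 → ℝ)).symm ![p 0, p 1, 0]) = φ (pt (p 0) (p 1) 0) :=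
    fun p => rfl
  -- derivative of u in direction x
  set Dxu : EuclideanSpace ℝ (Fin 2) → ℝ :=
    fun p => fderiv ℝ u p (EuclideanSpace.single 0 1) with hDxu
  have hDxu_cont : Continuous Dxu :=
    (hu.continuous_fderiv (by simp)).clm_apply continuous_const
  have hDxu_supp : HasCompactSupport Dxu := huc.fderiv_apply ℝ (EuclideanSpace.single 0 1)
  have hDxu2_int : Integrable (fun p => (Dxu p) ^ 2) :=
    ((continuous_pow 2).comp hDxu_cont).integrable_of_hasCompactSupport
      (hDxu_supp.comp_left (g := fun t : ℝ => t ^ 2) (by simp))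
  -- Q
  set Q : EuclideanSpace ℝ (Fin 3) → ℝ :=
    fun q => (fderiv ℝ φ q (EuclideanSpace.single 2 1)) ^ 2 with hQ
  have hfd_cont : Continuous (fderiv ℝ φ) := hφ.continuous_fderiv (by simp)
  have hQcont : Continuous Q := (hfd_cont.clm_apply continuous_const).pow 2
  have hQsupp : HasCompactSupport Q :=
    (hφc.fderiv ℝ).comp_left
      (g := fun L : EuclideanSpace ℝ (Fin 3) →L[ℝ] ℝ => (L (EuclideanSpace.single 2 1)) ^ 2)
      (by simp)
  have hQint : Integrable Q := hQcont.integrable_of_hasCompactSupport hQsupp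
  -- gradient square integrable and dominates Q
  have hA_int : Integrable (fun q : EuclideanSpace ℝ (Fin 3) => ‖fderiv ℝ φ q‖ ^ 2) :=
    ((continuous_pow 2).comp hfd_cont.norm).integrable_of_hasCompactSupport
      ((hφc.fderiv ℝ).norm.comp_left
        (g := fun t : ℝ => t ^ 2) (by simp))
  have hQleA : (∫ q, Q q) ≤ ∫ q : EuclideanSpace ℝ (Fin 3), ‖fderiv ℝ φ q‖ ^ 2 := by
    refine integral_mono hQint hA_int (fun q => ?_)
    have h1 : |fderiv ℝ φ q (EuclideanSpace.single 2 1)| ≤ ‖fderiv ℝ φ q‖ := by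
      have := (fderiv ℝ φ q).le_opNorm (EuclideanSpace.single (2 : Fin 3) (1:ℝ))
      simpa [EuclideanSpace.norm_single] using this
    calc Q q = |fderiv ℝ φ q (EuclideanSpace.single 2 1)| ^ 2 := (sq_abs _).symm
      _ ≤ ‖fderiv ℝ φ q‖ ^ 2 := by gcongr
  -- h'
  let h' : EuclideanSpace ℝ (Fin 2) → ℝ := fun p => ∫ z : ℝ, Q (pt (p 0) (p 1) z)
  have hh'_int : Integrable h' := fubini_int Q hQint
  have hh'_eq : (∫ p, h' p) = ∫ q, Q q := fubini_eq Q hQint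
  -- product integrable
  have hφ0_cont : Continuous (fun p : EuclideanSpace ℝ (Fin 2) => φ (pt (p 0) (p 1) 0)) :=
    hφ.continuous.comp continuous_plane
  have hprod_int : Integrable (fun p : EuclideanSpace ℝ (Fin 2) =>
      φ (pt (p 0) (p 1) 0) * Dxu p) :=
    (hφ0_cont.mul hDxu_cont).integrable_of_hasCompactSupport (hDxu_supp.mul_left)
  -- pointwise bound
  have hpoint : ∀ p : EuclideanSpace ℝ (Fin 2),
      2 * |φ (pt (p 0) (p 1) 0) * Dxu p| ≤ δ * h' p + (Z / δ) * (Dxu p) ^ 2 :=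
    fun p => pointwise_bound hZ hδ hφ hφc hφZ (p 0) (p 1) (Dxu p)
  -- integrate
  have hlhs_int : Integrable (fun p : EuclideanSpace ℝ (Fin 2) =>
      2 * |φ (pt (p 0) (p 1) 0) * Dxu p|) := (hprod_int.abs.const_mul 2)
  have hrhs_int : Integrable (fun p : EuclideanSpace ℝ (Fin 2) =>
      δ * h' p + (Z / δ) * (Dxu p) ^ 2) :=
    (hh'_int.const_mul δ).add (hDxu2_int.const_mul _)
  have hmain : 2 * |∫ p : EuclideanSpace ℝ (Fin 2), φ (pt (p 0) (p 1) 0) * Dxu p| ≤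
      δ * (∫ q, Q q) + (Z / δ) * ∫ p, (Dxu p) ^ 2 := by
    have h1 : |∫ p : EuclideanSpace ℝ (Fin 2), φ (pt (p 0) (p 1) 0) * Dxu p| ≤
        ∫ p : EuclideanSpace ℝ (Fin 2), |φ (pt (p 0) (p 1) 0) * Dxu p| := by
      simpa only [Real.norm_eq_abs] using norm_integral_le_integral_norm (μ := volume)
        (fun p : EuclideanSpace ℝ (Fin 2) => φ (pt (p 0) (p 1) 0) * Dxu p)
    have h2 : ∫ p : EuclideanSpace ℝ (Fin 2), 2 * |φ (pt (p 0) (p 1) 0) * Dxu p| ≤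
        ∫ p : EuclideanSpace ℝ (Fin 2), (δ * h' p + (Z / δ) * (Dxu p) ^ 2) :=
      integral_mono hlhs_int hrhs_int hpoint
    rw [integral_const_mul] at h2
    rw [integral_add (hh'_int.const_mul δ) (hDxu2_int.const_mul _), integral_const_mul,
      integral_const_mul, hh'_eq] at h2
    linarith
  -- conclude
  simp only [hkey, ← hDxu, sq_abs]
  have hB_nonneg := hmain
  have := mul_le_mul_of_nonneg_left hmain hU
  calc 2 * U * |∫ p : EuclideanSpace ℝ (Fin 2), φ (pt (p 0) (p 1) 0) * Dxu p|
      = U * (2 * |∫ p : EuclideanSpace ℝ (Fin 2), φ (pt (p 0) (p 1) 0) * Dxu p|) := by ring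
    _ ≤ U * (δ * (∫ q, Q q) + (Z / δ) * ∫ p, (Dxu p) ^ 2) := this
    _ ≤ U * (δ * (∫ q : EuclideanSpace ℝ (Fin 3), ‖fderiv ℝ φ q‖ ^ 2) +
          (Z / δ) * ∫ p, (Dxu p) ^ 2) := by
        have := mul_le_mul_of_nonneg_left hQleA (mul_nonneg hU hδ.le)
        linarith
    _ = U * δ * (∫ q : EuclideanSpace ℝ (Fin 3), ‖fderiv ℝ φ q‖ ^ 2) +
          (U * Z / δ) * ∫ p, (Dxu p) ^ 2 := by ring
end
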